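/- Suppose G(λ) < ∞ and ∑_{x∈ℕ^I} (∑_{i∈I} x_i) Φ(x) λ^x < ∞. Then the total mean number of jobs satisfies L = ( Λ(I) + ∑_{k∈K} μ_k ψ_k L_{|−k} ) / ( M(K) − Λ(I) ). -/

import Mathlib

open scoped BigOperators

/-- The balance function of balanced fairness: `Φ(0) = 1` and
`Φ(x) = (∑_{i : x_i > 0} Φ(x - e_i)) / M(⋃_{i : x_i > 0} 𝒦_i)`. -/
noncomputable def Phi {I K : Type} [Fintype I] [DecidableEq I] [DecidableEq K]
    (μ : K → ℝ) (Ka : I → Finset K) (x : I → ℕ) : ℝ :=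
  if x = fun _ => 0 then 1
  else (∑ i ∈ (Finset.univ.filter (fun i => 0 < x i)).attach,
      Phi μ Ka (Function.update x i.1 (x i.1 - 1))) /
    (∑ k ∈ (Finset.univ.filter (fun i => 0 < x i)).biUnion Ka, μ k)
termination_by ∑ i, x i
decreasing_by
  have hi := i.2
  simp only [Finset.mem_filter] at hi
  apply Finset.sum_lt_sum
  · intro j _
    rcases eq_or_ne j i.1 with rfl | h
    · simp [Function.update_self]
    · rw [Function.update_of_ne h]
  · exact ⟨i.1, Finset.mem_univ i.1, by simp [Function.update_self]; omega⟩

/-- The normalization series `G(λ) = ∑_{x∈ℕ^I} Φ(x) λ^x` (as a real tsum). -/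
noncomputable def Gf {I K : Type} [Fintype I] [DecidableEq I] [DecidableEq K]
    (μ : K → ℝ) (Ka : I → Finset K) (lam : I → ℝ) : ℝ :=
  ∑' x : I → ℕ, Phi μ Ka x * ∏ i, lam i ^ x i

/-- The total mean number of jobs, `L = ψ ∑_{x∈ℕ^I} (∑_i x_i) Φ(x) λ^x`. -/
noncomputable def totalMeanJobs {I K : Type} [Fintype I] [DecidableEq I] [DecidableEq K]
    (μ : K → ℝ) (Ka : I → Finset K) (lam : I → ℝ) : ℝ :=
  (Gf μ Ka lam)⁻¹ * ∑' x : I → ℕ, (∑ i, (x i : ℝ)) * Phi μ Ka x * ∏ j, lam j ^ x j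

/-- Arrival rates of the system with all traffic of classes assigned to server `k` removed. -/
def lamMinus {I K : Type} [DecidableEq K] (Ka : I → Finset K) (lam : I → ℝ) (k : K) :
    I → ℝ :=
  fun i => if k ∈ Ka i then 0 else lam i

/-!
Multiply the balance equations `M(busy x) Φ(x) = ∑_{i : x_i > 0} Φ(x - e_i)` by `(∑_i x_i) λ^x` and
sum over `x`. Reindexing by `x = y + e_i` turns the right-hand side into `Λ(I) (S + G)`, where
`S = ∑_y (∑_i y_i) Φ(y) λ^y`. On the left, `M(busy x) = M(K) - ∑_{k idle in x} μ_k`, and server `k`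
is idle in `x` exactly when `λ^x = λ_{|-k}^x` (otherwise `λ_{|-k}^x = 0`), so the left-hand side is
`M(K) S - ∑_k μ_k S_{|-k}`. Since `L = S / G` and `ψ_k L_{|-k} = S_{|-k} / G`, dividing by `G` gives
the recursion; the same identity with `G ≥ 1` and `S, S_{|-k} ≥ 0` forces `Λ(I) < M(K)`.
-/

open Finset

section BalanceFunction

variable {I K : Type} [Fintype I] [DecidableEq K]

def busyServers (Ka : I → Finset K) (x : I → ℕ) : Finset K :=
  (univ.filter fun i => 0 < x i).biUnion Ka

lemma mem_busyServers {Ka : I → Finset K} {x : I → ℕ} {k : K} :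
    k ∈ busyServers Ka x ↔ ∃ i, 0 < x i ∧ k ∈ Ka i := by
  simp [busyServers]

lemma sum_busyServers_pos {μ : K → ℝ} (hμ : ∀ k, 0 < μ k) {Ka : I → Finset K}
    (hKa : ∀ i, (Ka i).Nonempty) {x : I → ℕ} (hx : x ≠ 0) :
    0 < ∑ k ∈ busyServers Ka x, μ k := by
  obtain ⟨i, hi⟩ : ∃ i, x i ≠ 0 := Function.ne_iff.mp hx
  obtain ⟨k, hk⟩ := hKa i
  exact sum_pos (fun k _ => hμ k) ⟨k, mem_busyServers.mpr ⟨i, Nat.pos_of_ne_zero hi, hk⟩⟩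

variable [DecidableEq I] (μ : K → ℝ) (Ka : I → Finset K)

lemma Phi_zero : Phi μ Ka 0 = 1 := by
  rw [Phi]
  exact if_pos rfl

lemma Phi_nonneg (hμ : ∀ k, 0 ≤ μ k) (x : I → ℕ) : 0 ≤ Phi μ Ka x := by
  induction x using Phi.induct with
  | case1 => exact (Phi_zero μ Ka).ge.trans' zero_le_one
  | case2 x hx ih =>
    rw [Phi, if_neg hx]
    exact div_nonneg (sum_nonneg fun i _ => ih i) (sum_nonneg fun k _ => hμ k)

lemma sum_busyServers_mul_Phi {x : I → ℕ} (hx : ∑ k ∈ busyServers Ka x, μ k ≠ 0) :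
    (∑ k ∈ busyServers Ka x, μ k) * Phi μ Ka x =
      ∑ i ∈ univ with 0 < x i, Phi μ Ka (Function.update x i (x i - 1)) := by
  have hx0 : x ≠ fun _ => 0 := by
    rintro rfl
    simp [busyServers] at hx
  rw [Phi, if_neg hx0]
  change _ * (_ / ∑ k ∈ busyServers Ka x, μ k) = _
  rw [mul_div_cancel₀ _ hx]
  exact sum_attach _ fun i => Phi μ Ka (Function.update x i (x i - 1))

end BalanceFunction

section Shift

variable {I : Type} [DecidableEq I]

lemma add_single_injective (i : I) :
    Function.Injective fun y : I → ℕ => (y + Pi.single i 1 : I → ℕ) :=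
  add_left_injective _

lemma mem_range_add_single {i : I} {x : I → ℕ} (hx : x i ≠ 0) :
    x ∈ Set.range fun y : I → ℕ => y + Pi.single i 1 := by
  refine ⟨x - Pi.single i 1, funext fun j => ?_⟩
  rcases eq_or_ne j i with rfl | hj
  · simp only [Pi.add_apply, Pi.sub_apply, Pi.single_eq_same]
    omega
  · simp [hj]

lemma hasSum_add_single_iff {α : Type*} [AddCommMonoid α] [TopologicalSpace α]
    {f : (I → ℕ) → α} {a : α} (i : I) (hf : ∀ x, x i = 0 → f x = 0) :
    HasSum (fun y : I → ℕ => f (y + Pi.single i 1)) a ↔ HasSum f a :=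
  (add_single_injective i).hasSum_iff fun x hx =>
    hf x (not_not.mp fun h => hx (mem_range_add_single h))

lemma update_add_single_sub_one (i : I) (y : I → ℕ) :
    Function.update (y + Pi.single i 1) i ((y + Pi.single i 1 : I → ℕ) i - 1) = y := by
  ext j
  rcases eq_or_ne j i with rfl | hj <;> simp [*]

variable [Fintype I]

lemma sum_add_single (i : I) (y : I → ℕ) :
    ∑ j, ((y + Pi.single i 1 : I → ℕ) j : ℝ) = ∑ j, (y j : ℝ) + 1 := by
  simp [sum_add_distrib, Pi.single_apply]

lemma prod_pow_add_single (lam : I → ℝ) (i : I) (y : I → ℕ) :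
    ∏ j, lam j ^ (y + Pi.single i 1 : I → ℕ) j = lam i * ∏ j, lam j ^ y j := by
  simp only [Pi.add_apply, pow_add, prod_mul_distrib, mul_comm (∏ j, lam j ^ y j)]
  simp [Pi.single_apply, pow_ite]

end Shift

section Series

variable {I K : Type} [Fintype I] [DecidableEq K]

lemma prod_lamMinus_pow (Ka : I → Finset K) (lam : I → ℝ) (k : K) (x : I → ℕ) :
    ∏ j, lamMinus Ka lam k j ^ x j = if k ∈ busyServers Ka x then 0 else ∏ j, lam j ^ x j := by
  split_ifs with hk
  · obtain ⟨i, hi, hki⟩ := mem_busyServers.mp hk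
    exact prod_eq_zero (mem_univ i) (by simp [lamMinus, hki, hi.ne'])
  · refine prod_congr rfl fun i _ => ?_
    by_cases hki : k ∈ Ka i
    · have hxi : x i = 0 := by
        by_contra h
        exact hk (mem_busyServers.mpr ⟨i, Nat.pos_of_ne_zero h, hki⟩)
      simp [hxi]
    · simp [lamMinus, hki]

lemma summable_mul_prod_lamMinus_pow (Ka : I → Finset K) {w : (I → ℕ) → ℝ} {lam : I → ℝ}
    (h : Summable fun x => w x * ∏ j, lam j ^ x j) (k : K) :
    Summable fun x => w x * ∏ j, lamMinus Ka lam k j ^ x j := by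
  refine (h.indicator {x | k ∉ busyServers Ka x}).congr fun x => ?_
  by_cases hk : k ∈ busyServers Ka x <;> simp [prod_lamMinus_pow, hk]

variable [DecidableEq I] (μ : K → ℝ) (Ka : I → Finset K)

noncomputable def jobSeries (lam : I → ℝ) : ℝ :=
  ∑' x : I → ℕ, (∑ i, (x i : ℝ)) * Phi μ Ka x * ∏ j, lam j ^ x j

lemma totalMeanJobs_eq_div (lam : I → ℝ) :
    totalMeanJobs μ Ka lam = jobSeries μ Ka lam / Gf μ Ka lam := by
  rw [totalMeanJobs, jobSeries, inv_mul_eq_div]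

variable {μ Ka}

lemma sum_busyServers_mul_jobs_eq_sum_arrivals (hμ : ∀ k, 0 < μ k) (hKa : ∀ i, (Ka i).Nonempty)
    (lam : I → ℝ) (x : I → ℕ) :
    (∑ k ∈ busyServers Ka x, μ k) * ((∑ i, (x i : ℝ)) * Phi μ Ka x * ∏ j, lam j ^ x j) =
      ∑ i, if 0 < x i then
        (∑ j, (x j : ℝ)) * Phi μ Ka (Function.update x i (x i - 1)) * ∏ j, lam j ^ x j else 0 := by
  rcases eq_or_ne x 0 with rfl | hx
  · simp
  rw [← sum_filter, ← sum_mul, ← mul_sum,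
    ← sum_busyServers_mul_Phi μ Ka (sum_busyServers_pos hμ hKa hx).ne']
  ring

lemma sum_busyServers_mul_jobs_eq_sub [Fintype K] (lam : I → ℝ) (x : I → ℕ) :
    (∑ k ∈ busyServers Ka x, μ k) * ((∑ i, (x i : ℝ)) * Phi μ Ka x * ∏ j, lam j ^ x j) =
      (∑ k, μ k) * ((∑ i, (x i : ℝ)) * Phi μ Ka x * ∏ j, lam j ^ x j) -
        ∑ k, μ k * ((∑ i, (x i : ℝ)) * Phi μ Ka x * ∏ j, lamMinus Ka lam k j ^ x j) := by
  simp only [prod_lamMinus_pow, mul_ite, mul_zero]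
  generalize busyServers Ka x = s
  generalize (∑ i, (x i : ℝ)) * Phi μ Ka x * ∏ j, lam j ^ x j = F
  rw [← sum_compl_add_sum s μ, ← sum_add_sum_compl s, sum_eq_zero fun k hk => if_pos hk,
    zero_add, sum_congr rfl fun k hk => if_neg (mem_compl.mp hk), ← sum_mul]
  ring

variable {lam : I → ℝ}

lemma hasSum_arrivals_of_class (hG : Summable fun x : I → ℕ => Phi μ Ka x * ∏ j, lam j ^ x j)
    (hL : Summable fun x : I → ℕ => (∑ i, (x i : ℝ)) * Phi μ Ka x * ∏ j, lam j ^ x j) (i : I) :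
    HasSum (fun x : I → ℕ => if 0 < x i then
        (∑ j, (x j : ℝ)) * Phi μ Ka (Function.update x i (x i - 1)) * ∏ j, lam j ^ x j else 0)
      (lam i * (jobSeries μ Ka lam + Gf μ Ka lam)) := by
  rw [← hasSum_add_single_iff i fun x hx => by simp [hx]]
  refine ((hL.hasSum.add hG.hasSum).mul_left (lam i)).congr_fun fun y => ?_
  rw [if_pos (by simp), update_add_single_sub_one, sum_add_single, prod_pow_add_single]
  ring

lemma hasSum_sum_busyServers_mul_jobs_arrivals (hμ : ∀ k, 0 < μ k)
    (hKa : ∀ i, (Ka i).Nonempty) (hG : Summable fun x : I → ℕ => Phi μ Ka x * ∏ j, lam j ^ x j)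
    (hL : Summable fun x : I → ℕ => (∑ i, (x i : ℝ)) * Phi μ Ka x * ∏ j, lam j ^ x j) :
    HasSum (fun x : I → ℕ =>
        (∑ k ∈ busyServers Ka x, μ k) * ((∑ i, (x i : ℝ)) * Phi μ Ka x * ∏ j, lam j ^ x j))
      ((∑ i, lam i) * (jobSeries μ Ka lam + Gf μ Ka lam)) := by
  rw [sum_mul]
  exact (hasSum_sum fun i _ => hasSum_arrivals_of_class hG hL i).congr_fun
    (sum_busyServers_mul_jobs_eq_sum_arrivals hμ hKa lam)

lemma hasSum_sum_busyServers_mul_jobs_departures [Fintype K]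
    (hL : Summable fun x : I → ℕ => (∑ i, (x i : ℝ)) * Phi μ Ka x * ∏ j, lam j ^ x j) :
    HasSum (fun x : I → ℕ =>
        (∑ k ∈ busyServers Ka x, μ k) * ((∑ i, (x i : ℝ)) * Phi μ Ka x * ∏ j, lam j ^ x j))
      ((∑ k, μ k) * jobSeries μ Ka lam - ∑ k, μ k * jobSeries μ Ka (lamMinus Ka lam k)) :=
  ((hL.hasSum.mul_left _).sub (hasSum_sum fun k _ =>
    (summable_mul_prod_lamMinus_pow Ka hL k).hasSum.mul_left (μ k))).congr_fun
    (sum_busyServers_mul_jobs_eq_sub lam)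

lemma jobSeries_balance [Fintype K] (hμ : ∀ k, 0 < μ k) (hKa : ∀ i, (Ka i).Nonempty)
    (hG : Summable fun x : I → ℕ => Phi μ Ka x * ∏ j, lam j ^ x j)
    (hL : Summable fun x : I → ℕ => (∑ i, (x i : ℝ)) * Phi μ Ka x * ∏ j, lam j ^ x j) :
    (∑ i, lam i) * (jobSeries μ Ka lam + Gf μ Ka lam) =
      (∑ k, μ k) * jobSeries μ Ka lam - ∑ k, μ k * jobSeries μ Ka (lamMinus Ka lam k) :=
  (hasSum_sum_busyServers_mul_jobs_arrivals hμ hKa hG hL).unique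
    (hasSum_sum_busyServers_mul_jobs_departures hL)

end Series

section Stability

variable {I K : Type} [Fintype I] [DecidableEq I] [DecidableEq K]
  {μ : K → ℝ} {Ka : I → Finset K} {lam : I → ℝ}

omit [Fintype I] [DecidableEq I] in
lemma lamMinus_nonneg (hlam : ∀ i, 0 ≤ lam i) (k : K) (i : I) : 0 ≤ lamMinus Ka lam k i := by
  unfold lamMinus
  split_ifs
  exacts [le_rfl, hlam i]

lemma one_le_Gf (hμ : ∀ k, 0 ≤ μ k) (hlam : ∀ i, 0 ≤ lam i)
    (hG : Summable fun x : I → ℕ => Phi μ Ka x * ∏ j, lam j ^ x j) : 1 ≤ Gf μ Ka lam :=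
  calc 1 = Phi μ Ka 0 * ∏ j, lam j ^ (0 : I → ℕ) j := by simp [Phi_zero]
    _ ≤ Gf μ Ka lam := hG.le_tsum 0 fun x _ =>
      mul_nonneg (Phi_nonneg μ Ka hμ x) (prod_nonneg fun j _ => pow_nonneg (hlam j) _)

lemma jobSeries_nonneg (hμ : ∀ k, 0 ≤ μ k) (hlam : ∀ i, 0 ≤ lam i) : 0 ≤ jobSeries μ Ka lam :=
  tsum_nonneg fun x => mul_nonneg
    (mul_nonneg (sum_nonneg fun _ _ => Nat.cast_nonneg _) (Phi_nonneg μ Ka hμ x))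
    (prod_nonneg fun j _ => pow_nonneg (hlam j) _)

lemma sum_lam_lt_sum_mu [Fintype K] [Nonempty K] (hμ : ∀ k, 0 < μ k)
    (hKa : ∀ i, (Ka i).Nonempty) (hlam : ∀ i, 0 ≤ lam i)
    (hG : Summable fun x : I → ℕ => Phi μ Ka x * ∏ j, lam j ^ x j)
    (hL : Summable fun x : I → ℕ => (∑ i, (x i : ℝ)) * Phi μ Ka x * ∏ j, lam j ^ x j) :
    ∑ i, lam i < ∑ k, μ k := by
  have hμ₀ : ∀ k, 0 ≤ μ k := fun k => (hμ k).le
  have hbal := jobSeries_balance hμ hKa hG hL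
  have hG₁ := one_le_Gf hμ₀ hlam hG
  have hS := jobSeries_nonneg (Ka := Ka) hμ₀ hlam
  have hSk : 0 ≤ ∑ k, μ k * jobSeries μ Ka (lamMinus Ka lam k) :=
    sum_nonneg fun k _ => mul_nonneg (hμ₀ k) (jobSeries_nonneg hμ₀ (lamMinus_nonneg hlam k))
  have hM : 0 < ∑ k, μ k := sum_pos (fun k _ => hμ k) univ_nonempty
  by_contra! h
  nlinarith

end Stability

theorem mean_jobs_recursion_total_general
    {I K : Type} [Fintype I] [DecidableEq I]
    [Fintype K] [DecidableEq K] [Nonempty K]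
    (μ : K → ℝ) (hμ : ∀ k, 0 < μ k)
    (Ka : I → Finset K) (hKa : ∀ i, (Ka i).Nonempty)
    (lam : I → ℝ) (hlam : ∀ i, 0 ≤ lam i)
    (hG : Summable (fun x : I → ℕ => Phi μ Ka x * ∏ j, lam j ^ x j))
    (hL : Summable (fun x : I → ℕ => (∑ i, (x i : ℝ)) * Phi μ Ka x * ∏ j, lam j ^ x j)) :
    totalMeanJobs μ Ka lam =
      ((∑ i, lam i) + ∑ k,
          μ k * ((Gf μ Ka lam)⁻¹ / (Gf μ Ka (lamMinus Ka lam k))⁻¹) *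
            totalMeanJobs μ Ka (lamMinus Ka lam k)) /
        ((∑ k, μ k) - ∑ i, lam i) := by
  have hμ₀ : ∀ k, 0 ≤ μ k := fun k => (hμ k).le
  have hG₀ : Gf μ Ka lam ≠ 0 := (zero_lt_one.trans_le (one_le_Gf hμ₀ hlam hG)).ne'
  have hGk₀ : ∀ k, Gf μ Ka (lamMinus Ka lam k) ≠ 0 := fun k =>
    (zero_lt_one.trans_le (one_le_Gf hμ₀ (lamMinus_nonneg hlam k)
      (summable_mul_prod_lamMinus_pow Ka hG k))).ne'
  have hterm : ∀ k, μ k * ((Gf μ Ka lam)⁻¹ / (Gf μ Ka (lamMinus Ka lam k))⁻¹) *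
      totalMeanJobs μ Ka (lamMinus Ka lam k) =
        μ k * jobSeries μ Ka (lamMinus Ka lam k) / Gf μ Ka lam := fun k => by
    rw [totalMeanJobs_eq_div]
    field_simp [hGk₀ k]
  have hstable := sum_lam_lt_sum_mu hμ hKa hlam hG hL
  rw [sum_congr rfl fun k _ => hterm k, ← sum_div, totalMeanJobs_eq_div,
    eq_div_iff (sub_pos.mpr hstable).ne']
  field_simp
  linear_combination -jobSeries_balance hμ hKa hG hL

/-- **Theorem 2 of the paper, total.** If `G(λ) < ∞` and
`∑_x (∑_i x_i) Φ(x) λ^x < ∞`, the total mean number of jobs satisfies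
`L = (Λ(I) + ∑_{k∈K} μ_k ψ_k L_{|−k}) / (M(K) − Λ(I))`, where `ψ_k = ψ / ψ_{|−k}`. -/
theorem mean_jobs_recursion_total
    {I K : Type} [Fintype I] [DecidableEq I] [Nonempty I]
    [Fintype K] [DecidableEq K] [Nonempty K]
    (μ : K → ℝ) (hμ : ∀ k, 0 < μ k)
    (Ka : I → Finset K) (hKa : ∀ i, (Ka i).Nonempty) (hcov : ∀ k, ∃ i, k ∈ Ka i)
    (lam : I → ℝ) (hlam : ∀ i, 0 ≤ lam i)
    (hG : Summable (fun x : I → ℕ => Phi μ Ka x * ∏ j, lam j ^ x j))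
    (hL : Summable (fun x : I → ℕ => (∑ i, (x i : ℝ)) * Phi μ Ka x * ∏ j, lam j ^ x j)) :
    totalMeanJobs μ Ka lam =
      ((∑ i, lam i) + ∑ k,
          μ k * ((Gf μ Ka lam)⁻¹ / (Gf μ Ka (lamMinus Ka lam k))⁻¹) *
            totalMeanJobs μ Ka (lamMinus Ka lam k)) /
        ((∑ k, μ k) - ∑ i, lam i) :=
  mean_jobs_recursion_total_general μ hμ Ka hKa lam hlam hG hL
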